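/- Let Δ₃ be the simplicial complex on vertices {w_{i,j} : 1 ≤ i ≤ m, 1 ≤ j ≤ n} (m ≤ n, m ≥ 3) whose faces are sets containing no triple w_{i,r}, w_{j,q}, w_{k,p} with i < j < k and p < q < r. Then every facet of Δ₃ is a union of two disjoint monotone lattice paths, from (1,1) to (m,n) and from (2,1) to (m,n-1), and conversely every such union of disjoint paths is a facet. In particular Δ₃ is pure of dimension 2m+2n-5. -/

import Mathlib

/-!
A monotone lattice path is a chain for the componentwise order on positions, so a union of two
paths contains no antichain of size three, i.e. it is a face. It is maximal because two disjoint
such paths meet every antidiagonal `i + j = s` with `3 ≤ s ≤ m + n - 1` in two points, whereas a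
face meets each antidiagonal in at most two points.

Rows are numbered downwards, so `w` lies strictly north-east of `u` when `w.1 < u.1` and
`u.2 < w.2`. Conversely, a facet contains the six positions next to the corners, since they lie
in no antichain of size three. Split the facet into the points having another point of it
strictly to their north-east and the remaining points. Both parts are chains (a crossing pair in
the first part would give a forbidden triple), and no point of the first part lies weakly
north-east of a point of the second. Hence the north-east-most path through the second part and
the south-west-most path through the first part are disjoint; their union is a face containing
the facet, hence equal to it.
-/

/-- A single step in a monotone lattice path: one unit down or one unit right. -/
def IsStep (p q : ℕ × ℕ) : Prop := q = (p.1 + 1, p.2) ∨ q = (p.1, p.2 + 1)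

/-- `L` is a monotone lattice path from `(a,b)` to `(c,d)`. -/
def IsPath (a b c d : ℕ) (L : List (ℕ × ℕ)) : Prop :=
  L ≠ [] ∧ L.head? = some (a, b) ∧ L.getLast? = some (c, d) ∧ L.Chain' IsStep

/-- A face of `Δ₃`: a set of grid positions with no strictly decreasing antidiagonal triple. -/
def IsFace3 (m n : ℕ) (F : Finset (ℕ × ℕ)) : Prop :=
  (∀ v ∈ F, 1 ≤ v.1 ∧ v.1 ≤ m ∧ 1 ≤ v.2 ∧ v.2 ≤ n) ∧
  ∀ i j k p q r : ℕ, i < j → j < k → p < q → q < r →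
    ¬((i, r) ∈ F ∧ (j, q) ∈ F ∧ (k, p) ∈ F)

def IsFacet3 (m n : ℕ) (F : Finset (ℕ × ℕ)) : Prop :=
  IsFace3 m n F ∧ ∀ G : Finset (ℕ × ℕ), IsFace3 m n G → F ⊆ G → F = G

theorem List.eq_range'_of_isChain_succ :
    ∀ {l : List ℕ} {k : ℕ}, l.head? = some k → l.IsChain (fun i j => j = i + 1) →
      l = List.range' k l.length
  | [], _, h, _ => by simp at h
  | [x], _, h, _ => by simp_all
  | x :: y :: t, k, h, hc => by
    obtain rfl : x = k := by simpa using h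
    obtain ⟨rfl, hc⟩ := List.isChain_cons_cons.mp hc
    have ih := List.eq_range'_of_isChain_succ (k := x + 1) (by simp) hc
    rw [List.length_cons, List.range'_succ, ← ih]

theorem IsStep.le {p q : ℕ × ℕ} (h : IsStep p q) : p ≤ q := by
  rcases h with rfl | rfl <;> simp [Prod.le_def]

theorem IsStep.sum_eq {p q : ℕ × ℕ} (h : IsStep p q) : q.1 + q.2 = p.1 + p.2 + 1 := by
  rcases h with rfl | rfl <;> simp only <;> omega

namespace IsPath

variable {a b c d : ℕ} {L : List (ℕ × ℕ)}

theorem head_mem (h : IsPath a b c d L) : (a, b) ∈ L := List.mem_of_mem_head? h.2.1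

theorem getLast_mem (h : IsPath a b c d L) : (c, d) ∈ L := List.mem_of_getLast? h.2.2.1

theorem pairwise_le (h : IsPath a b c d L) : L.Pairwise (· ≤ ·) :=
  (h.2.2.2.imp fun _ _ (hpq : IsStep _ _) => hpq.le).pairwise

theorem isChain (h : IsPath a b c d L) : IsChain (· ≤ ·) {u | u ∈ L} :=
  fun _ hu _ hv _ => List.Pairwise.forall_of_forall_of_flip
    (R := fun u v : ℕ × ℕ => u ≤ v ∨ v ≤ u) (fun _ _ => Or.inl le_rfl)
    (h.pairwise_le.imp Or.inl) (h.pairwise_le.imp Or.inr) hu hv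

theorem map_sum_eq_range' (h : IsPath a b c d L) :
    L.map (fun u => u.1 + u.2) = List.range' (a + b) L.length := by
  have hc : (L.map fun u => u.1 + u.2).IsChain (fun i j => j = i + 1) :=
    (List.isChain_map _).mpr (h.2.2.2.imp fun p q (hpq : IsStep p q) => hpq.sum_eq)
  simpa using List.eq_range'_of_isChain_succ (by simp [h.2.1]) hc

theorem length_eq (h : IsPath a b c d L) : L.length = c + d + 1 - (a + b) := by
  have hlast := congrArg List.getLast? h.map_sum_eq_range'
  rw [List.getLast?_map, h.2.2.1, List.getLast?_range'] at hlast
  have hpos : L.length ≠ 0 := by simpa using h.1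
  simp only [Option.map_some, hpos, if_false, Option.some.injEq] at hlast
  omega

theorem exists_mem_sum_eq (h : IsPath a b c d L) {s : ℕ} (hs : a + b ≤ s) (hs' : s ≤ c + d) :
    ∃ u ∈ L, u.1 + u.2 = s := by
  have hmem : s ∈ L.map (fun u => u.1 + u.2) := by
    rw [h.map_sum_eq_range', List.mem_range'_1, h.length_eq]; omega
  simpa using hmem

theorem sum_mem_Icc (h : IsPath a b c d L) {u : ℕ × ℕ} (hu : u ∈ L) :
    a + b ≤ u.1 + u.2 ∧ u.1 + u.2 ≤ c + d := by
  have hmem : u.1 + u.2 ∈ L.map (fun u => u.1 + u.2) := List.mem_map_of_mem hu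
  rw [h.map_sum_eq_range', List.mem_range'_1, h.length_eq] at hmem
  omega

theorem mem_bounds (h : IsPath a b c d L) {u : ℕ × ℕ} (hu : u ∈ L) :
    (a, b) ≤ u ∧ u ≤ (c, d) := by
  have hsum := h.sum_mem_Icc hu
  have hlo := h.isChain.total h.head_mem hu
  have hhi := h.isChain.total hu h.getLast_mem
  simp only [Prod.le_def] at hlo hhi ⊢
  omega

theorem nodup (h : IsPath a b c d L) : L.Nodup :=
  List.Nodup.of_map _ (h.map_sum_eq_range' ▸ List.nodup_range')

theorem map_swap (h : IsPath a b c d L) : IsPath b a d c (L.map Prod.swap) := by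
  refine ⟨by simpa using h.1, by simp [h.2.1], by simp [h.2.2.1], ?_⟩
  refine (List.isChain_map _).mpr (h.2.2.2.imp fun p q hpq => ?_)
  rcases hpq with rfl | rfl
  · exact Or.inr rfl
  · exact Or.inl rfl

end IsPath

theorem isChain_le_iff_forall_not_crossing {s : Set (ℕ × ℕ)} :
    IsChain (· ≤ ·) s ↔ ∀ u ∈ s, ∀ v ∈ s, ¬(u.1 < v.1 ∧ v.2 < u.2) := by
  refine ⟨fun hs u hu v hv => ?_, fun h u hu v hv _ => ?_⟩
  · have := hs.total hu hv
    simp only [Prod.le_def] at this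
    omega
  · have := h u hu v hv
    have := h v hv u hu
    simp only [Prod.le_def]
    omega

theorem isFace3_union_of_isChain {m n : ℕ} {A B : Finset (ℕ × ℕ)}
    (hbox : ∀ v ∈ A ∪ B, 1 ≤ v.1 ∧ v.1 ≤ m ∧ 1 ≤ v.2 ∧ v.2 ≤ n)
    (hA : IsChain (· ≤ ·) (A : Set (ℕ × ℕ))) (hB : IsChain (· ≤ ·) (B : Set (ℕ × ℕ))) :
    IsFace3 m n (A ∪ B) := by
  refine ⟨hbox, fun i j k p q r hij hjk hpq hqr h => ?_⟩
  obtain ⟨hi, hj, hk⟩ := h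
  simp only [Finset.mem_union] at hi hj hk
  wlog hjA : (j, q) ∈ A generalizing A B
  · rw [Finset.union_comm] at hbox
    exact this hbox hB hA hi.symm hj.symm hk.symm (hj.resolve_left hjA)
  have hA' := isChain_le_iff_forall_not_crossing.mp hA
  have hB' := isChain_le_iff_forall_not_crossing.mp hB
  rcases hi with hi | hi
  · exact hA' _ hi _ hjA ⟨hij, hqr⟩
  rcases hk with hk | hk
  · exact hA' _ hjA _ hk ⟨hjk, hpq⟩
  · exact hB' _ hi _ hk ⟨hij.trans hjk, hpq.trans hqr⟩

namespace IsFace3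

variable {m n : ℕ} {F : Finset (ℕ × ℕ)}

theorem eq_or_eq_of_sum_eq (hF : IsFace3 m n F) {u v w : ℕ × ℕ} (hu : u ∈ F) (hv : v ∈ F)
    (hw : w ∈ F) (huv : u ≠ v) (hu' : u.1 + u.2 = w.1 + w.2) (hv' : v.1 + v.2 = w.1 + w.2) :
    w = u ∨ w = v := by
  wlog hlt : u.1 < v.1 generalizing u v
  · have hne : u.1 ≠ v.1 := fun h => huv (Prod.ext h (by omega))
    exact (this hv hu huv.symm hv' hu' (by omega)).symm
  by_contra! hne
  have hwu : w.1 ≠ u.1 := fun h => hne.1 (Prod.ext h (by omega))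
  have hwv : w.1 ≠ v.1 := fun h => hne.2 (Prod.ext h (by omega))
  have triple := hF.2
  rcases lt_or_gt_of_ne hwu with h | h
  · exact triple w.1 u.1 v.1 v.2 u.2 w.2 h hlt (by omega) (by omega) ⟨hw, hu, hv⟩
  rcases lt_or_gt_of_ne hwv with h' | h'
  · exact triple u.1 w.1 v.1 v.2 w.2 u.2 h h' (by omega) (by omega) ⟨hu, hw, hv⟩
  · exact triple u.1 v.1 w.1 w.2 v.2 u.2 hlt h' (by omega) (by omega) ⟨hu, hv, hw⟩

theorem union_of_sum_le_three_or_ge (hF : IsFace3 m n F) {C : Finset (ℕ × ℕ)}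
    (hC : ∀ v ∈ C, (1 ≤ v.1 ∧ v.1 ≤ m ∧ 1 ≤ v.2 ∧ v.2 ≤ n) ∧
      (v.1 + v.2 ≤ 3 ∨ m + n - 1 ≤ v.1 + v.2)) :
    IsFace3 m n (F ∪ C) := by
  have hbox : ∀ v ∈ F ∪ C, 1 ≤ v.1 ∧ v.1 ≤ m ∧ 1 ≤ v.2 ∧ v.2 ≤ n :=
    fun v hv => (Finset.mem_union.mp hv).elim (hF.1 v) fun hv => (hC v hv).1
  refine ⟨hbox, fun i j k p q r hij hjk hpq hqr ⟨hi, hj, hk⟩ => ?_⟩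
  have := hbox _ hi; have := hbox _ hj; have := hbox _ hk
  have mem_F : ∀ v ∈ F ∪ C, 4 ≤ v.1 + v.2 → v.1 + v.2 + 2 ≤ m + n → v ∈ F := by
    intro v hv h4 h2
    refine (Finset.mem_union.mp hv).resolve_right fun hvC => ?_
    have := (hC v hvC).2
    omega
  exact hF.2 i j k p q r hij hjk hpq hqr
    ⟨mem_F _ hi (by simp only; omega) (by simp only; omega),
      mem_F _ hj (by simp only; omega) (by simp only; omega),
      mem_F _ hk (by simp only; omega) (by simp only; omega)⟩

end IsFace3

/-- The least row at antidiagonal `s` of a monotone path through all points of `S`: a point `x`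
of `S` forces the row to be at least `x.1` after `x` and the column at most `x.2` before it. -/
def chainRow (S : Finset (ℕ × ℕ)) (s : ℕ) : ℕ :=
  S.sup fun x => min x.1 (s - x.2)

def chainPath (S : Finset (ℕ × ℕ)) (a b c d : ℕ) : List (ℕ × ℕ) :=
  (List.range' (a + b) (c + d + 1 - (a + b))).map fun s => (chainRow S s, s - chainRow S s)

section ChainPath

variable {S : Finset (ℕ × ℕ)} {a b c d : ℕ}

theorem chainRow_le_self (S : Finset (ℕ × ℕ)) (s : ℕ) : chainRow S s ≤ s :=
  Finset.sup_le fun _ _ => (min_le_right _ _).trans (Nat.sub_le _ _)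

theorem chainRow_le_chainRow_succ (S : Finset (ℕ × ℕ)) (s : ℕ) :
    chainRow S s ≤ chainRow S (s + 1) :=
  Finset.sup_mono_fun fun _ _ => min_le_min_left _ (Nat.sub_le_sub_right s.le_succ _)

theorem chainRow_succ_le (S : Finset (ℕ × ℕ)) (s : ℕ) :
    chainRow S (s + 1) ≤ chainRow S s + 1 :=
  Finset.sup_le fun x hx =>
    (show min x.1 (s + 1 - x.2) ≤ min x.1 (s - x.2) + 1 by omega).trans
      (Nat.add_le_add_right (Finset.le_sup (f := fun x => min x.1 (s - x.2)) hx) 1)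

theorem chainRow_of_mem (hS : IsChain (· ≤ ·) (S : Set (ℕ × ℕ))) {x : ℕ × ℕ} (hx : x ∈ S) :
    chainRow S (x.1 + x.2) = x.1 := by
  refine le_antisymm (Finset.sup_le fun y hy => ?_) ?_
  · have hxy := hS.total (Finset.mem_coe.mpr hx) (Finset.mem_coe.mpr hy)
    simp only [Prod.le_def] at hxy
    omega
  · simpa [chainRow] using Finset.le_sup (f := fun y => min y.1 (x.1 + x.2 - y.2)) hx

theorem isPath_chainPath (hS : IsChain (· ≤ ·) (S : Set (ℕ × ℕ))) (hab : (a, b) ∈ S)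
    (hcd : (c, d) ∈ S) (hle : a + b ≤ c + d) : IsPath a b c d (chainPath S a b c d) := by
  have hlen : c + d + 1 - (a + b) ≠ 0 := by omega
  have hlast : a + b + (c + d + 1 - (a + b)) - 1 = c + d := by omega
  refine ⟨by simpa [chainPath] using hlen, ?_, ?_, ?_⟩
  · simp [chainPath, List.head?_range', hlen, chainRow_of_mem hS hab]
  · simp [chainPath, List.getLast?_range', hlen, hlast, chainRow_of_mem hS hcd]
  · refine (List.isChain_map _).mpr ((List.isChain_range' _ _ 1).imp fun s t hst => ?_)
    subst hst
    have := chainRow_le_self S s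
    have := chainRow_le_chainRow_succ S s
    have := chainRow_succ_le S s
    rcases (show chainRow S (s + 1) = chainRow S s + 1 ∨ chainRow S (s + 1) = chainRow S s by
      omega) with h | h
    · exact Or.inl (Prod.ext h (by simp only; omega))
    · exact Or.inr (Prod.ext h (by simp only; omega))

theorem mem_chainPath (hS : IsChain (· ≤ ·) (S : Set (ℕ × ℕ))) {x : ℕ × ℕ} (hx : x ∈ S)
    (hlo : a + b ≤ x.1 + x.2) (hhi : x.1 + x.2 ≤ c + d) : x ∈ chainPath S a b c d := by
  refine List.mem_map.mpr ⟨x.1 + x.2, List.mem_range'_1.mpr (by omega), ?_⟩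
  rw [chainRow_of_mem hS hx, Nat.add_sub_cancel_left]

theorem chainRow_of_mem_chainPath {v : ℕ × ℕ} (hv : v ∈ chainPath S a b c d) :
    chainRow S (v.1 + v.2) = v.1 := by
  obtain ⟨s, -, rfl⟩ := List.mem_map.mp hv
  rw [Nat.add_sub_cancel' (chainRow_le_self S s)]

theorem chainRow_add_chainRow_lt {T : Finset (ℕ × ℕ)} (hS : S.Nonempty) (hT : T.Nonempty)
    (hS₂ : ∀ x ∈ S, 0 < x.2) (hT₂ : ∀ y ∈ T, 0 < y.2)
    (hsep : ∀ x ∈ S, ∀ y ∈ T, x.1 < y.2 ∨ y.1 < x.2) {s : ℕ} (hs : 0 < s) :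
    chainRow S s + chainRow T s < s := by
  obtain ⟨x, hx, hxs⟩ := Finset.exists_mem_eq_sup S hS fun x => min x.1 (s - x.2)
  obtain ⟨y, hy, hyt⟩ := Finset.exists_mem_eq_sup T hT fun y => min y.1 (s - y.2)
  rw [chainRow, chainRow, hxs, hyt]
  have := hsep x hx y hy
  have := hS₂ x hx
  have := hT₂ y hy
  omega

end ChainPath

def lowerPart (F : Finset (ℕ × ℕ)) : Finset (ℕ × ℕ) :=
  F.filter fun u => ∃ w ∈ F, w.1 < u.1 ∧ u.2 < w.2

def upperPart (F : Finset (ℕ × ℕ)) : Finset (ℕ × ℕ) :=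
  F.filter fun u => ¬∃ w ∈ F, w.1 < u.1 ∧ u.2 < w.2

section Parts

variable {F : Finset (ℕ × ℕ)}

theorem upperPart_union_lowerPart (F : Finset (ℕ × ℕ)) : upperPart F ∪ lowerPart F = F := by
  rw [upperPart, lowerPart, Finset.union_comm, Finset.filter_union_filter_not_eq]

theorem isChain_upperPart (F : Finset (ℕ × ℕ)) :
    IsChain (· ≤ ·) (upperPart F : Set (ℕ × ℕ)) :=
  isChain_le_iff_forall_not_crossing.mpr fun _ hu _ hv h =>
    (Finset.mem_filter.mp hv).2 ⟨_, (Finset.mem_filter.mp hu).1, h⟩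

theorem IsFace3.isChain_lowerPart {m n : ℕ} (hF : IsFace3 m n F) :
    IsChain (· ≤ ·) (lowerPart F : Set (ℕ × ℕ)) := by
  refine isChain_le_iff_forall_not_crossing.mpr fun u hu v hv ⟨huv₁, huv₂⟩ => ?_
  obtain ⟨huF, w, hw, hwu₁, hwu₂⟩ := Finset.mem_filter.mp hu
  exact hF.2 w.1 u.1 v.1 v.2 u.2 w.2 hwu₁ huv₁ huv₂ hwu₂ ⟨hw, huF, (Finset.mem_filter.mp hv).1⟩

theorem lt_or_lt_of_mem_upperPart_of_mem_lowerPart {x y : ℕ × ℕ} (hx : x ∈ upperPart F)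
    (hy : y ∈ lowerPart F) : x.1 < y.1 ∨ y.2 < x.2 := by
  obtain ⟨-, w, hw, hwy₁, hwy₂⟩ := Finset.mem_filter.mp hy
  by_contra! h
  exact (Finset.mem_filter.mp hx).2 ⟨w, hw, by omega, by omega⟩

theorem IsFace3.mem_upperPart {m n : ℕ} (hF : IsFace3 m n F) {x : ℕ × ℕ} (hx : x ∈ F)
    (hx' : x.1 = 1 ∨ x.2 = n) : x ∈ upperPart F :=
  Finset.mem_filter.mpr ⟨hx, fun ⟨w, hw, hw₁, hw₂⟩ => by have := hF.1 w hw; omega⟩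

theorem IsFace3.lowerPart_bounds {m n : ℕ} (hF : IsFace3 m n F) {y : ℕ × ℕ}
    (hy : y ∈ lowerPart F) : 2 ≤ y.1 ∧ y.1 ≤ m ∧ 1 ≤ y.2 ∧ y.2 + 1 ≤ n := by
  obtain ⟨hyF, w, hw, hwy₁, hwy₂⟩ := Finset.mem_filter.mp hy
  have := hF.1 y hyF
  have := hF.1 w hw
  omega

end Parts

def nearCorners (m n : ℕ) : Finset (ℕ × ℕ) :=
  {(1, 1), (1, 2), (2, 1), (m - 1, n), (m, n - 1), (m, n)}

section Facets

variable {m n : ℕ}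

theorem IsFacet3.corners_subset {F : Finset (ℕ × ℕ)} (hF : IsFacet3 m n F) (hm : 2 ≤ m)
    (hn : 2 ≤ n) : nearCorners m n ⊆ F := by
  refine Finset.union_eq_left.mp (hF.2 _ (hF.1.union_of_sum_le_three_or_ge fun v hv => ?_)
    Finset.subset_union_left).symm
  simp only [nearCorners, Finset.mem_insert, Finset.mem_singleton] at hv
  rcases hv with rfl | rfl | rfl | rfl | rfl | rfl <;> simp only <;> omega

theorem chainPath_upperPart_disjoint {F : Finset (ℕ × ℕ)} (hF : ∀ v ∈ F, 0 < v.1 ∧ 0 < v.2)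
    (hU : (upperPart F).Nonempty) (hL : (lowerPart F).Nonempty) {a b c d a' b' c' d' : ℕ}
    {v : ℕ × ℕ} (hv : 0 < v.1 + v.2) (hvP : v ∈ chainPath (upperPart F) a b c d)
    (hvQ : v.swap ∈ chainPath ((lowerPart F).image Prod.swap) a' b' c' d') : False := by
  have hrowU := chainRow_of_mem_chainPath hvP
  have hrowD := chainRow_of_mem_chainPath hvQ
  simp only [Prod.fst_swap, Prod.snd_swap, add_comm v.2] at hrowD
  have := chainRow_add_chainRow_lt hU (hL.image Prod.swap)
    (fun x hx => (hF x (Finset.mem_filter.mp hx).1).2)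
    (fun y hy => by
      obtain ⟨z, hz, rfl⟩ := Finset.mem_image.mp hy
      exact (hF z (Finset.mem_filter.mp hz).1).1)
    (fun x hx y hy => by
      obtain ⟨z, hz, rfl⟩ := Finset.mem_image.mp hy
      exact lt_or_lt_of_mem_upperPart_of_mem_lowerPart hx hz)
    hv
  omega

theorem IsFace3.exists_paths {F : Finset (ℕ × ℕ)} (hF : IsFace3 m n F) (hm : 2 ≤ m) (hn : 2 ≤ n)
    (hcorners : nearCorners m n ⊆ F) :
    ∃ P Q : List (ℕ × ℕ), IsPath 1 1 m n P ∧ IsPath 2 1 m (n - 1) Q ∧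
      (∀ v ∈ P, v ∉ Q) ∧ F ⊆ P.toFinset ∪ Q.toFinset := by
  simp only [nearCorners, Finset.insert_subset_iff, Finset.singleton_subset_iff] at hcorners
  obtain ⟨h11, h12, h21, hm1n, hmn1, hmn⟩ := hcorners
  have hU11 := hF.mem_upperPart h11 (Or.inl rfl)
  have hUmn := hF.mem_upperPart hmn (Or.inr rfl)
  have hL21 : (2, 1) ∈ lowerPart F := Finset.mem_filter.mpr ⟨h21, _, h12, by omega, by omega⟩
  have hLmn : (m, n - 1) ∈ lowerPart F :=
    Finset.mem_filter.mpr ⟨hmn1, _, hm1n, by simp only; omega, by simp only; omega⟩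
  have hU := isChain_upperPart F
  have hD : IsChain (· ≤ ·) (((lowerPart F).image Prod.swap : Finset _) : Set (ℕ × ℕ)) := by
    rw [Finset.coe_image]
    exact hF.isChain_lowerPart.image_of_map_rel _ _ _ fun x y => Prod.swap_le_swap.mpr
  have hP := isPath_chainPath hU hU11 hUmn (by omega)
  -- transposing turns the least-row path into the least-column one
  have hQ := (isPath_chainPath hD (Finset.mem_image_of_mem Prod.swap hL21)
    (Finset.mem_image_of_mem Prod.swap hLmn) (by omega)).map_swap
  refine ⟨_, _, hP, hQ, fun v hvP hvQ => ?_, ?_⟩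
  · obtain ⟨w, hw, rfl⟩ := List.mem_map.mp hvQ
    have := (hP.sum_mem_Icc hvP).1
    exact chainPath_upperPart_disjoint (fun v hv => ⟨(hF.1 v hv).1, (hF.1 v hv).2.2.1⟩)
      ⟨_, hU11⟩ ⟨_, hL21⟩ (by omega) hvP (by simpa using hw)
  refine (upperPart_union_lowerPart F).ge.trans
    (Finset.union_subset_union (fun x hx => ?_) (fun y hy => ?_)) <;> rw [List.mem_toFinset]
  · have := hF.1 x (Finset.mem_filter.mp hx).1
    exact mem_chainPath hU hx (by omega) (by omega)
  · have := hF.lowerPart_bounds hy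
    refine List.mem_map.mpr ⟨y.swap, mem_chainPath hD (Finset.mem_image_of_mem _ hy) ?_ ?_,
      Prod.swap_swap y⟩ <;> simp only [Prod.fst_swap, Prod.snd_swap] <;> omega

theorem isFacet3_of_paths {P Q : List (ℕ × ℕ)} (hP : IsPath 1 1 m n P)
    (hQ : IsPath 2 1 m (n - 1) Q) (hPQ : ∀ v ∈ P, v ∉ Q) :
    IsFacet3 m n (P.toFinset ∪ Q.toFinset) := by
  have hbox : ∀ v ∈ P.toFinset ∪ Q.toFinset, 1 ≤ v.1 ∧ v.1 ≤ m ∧ 1 ≤ v.2 ∧ v.2 ≤ n := by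
    intro v hv
    rcases Finset.mem_union.mp hv with hv | hv
    · have := hP.mem_bounds (List.mem_toFinset.mp hv)
      simp only [Prod.le_def] at this
      omega
    · have := hQ.mem_bounds (List.mem_toFinset.mp hv)
      simp only [Prod.le_def] at this
      omega
  refine ⟨isFace3_union_of_isChain hbox (by simpa using hP.isChain) (by simpa using hQ.isChain),
    fun G hG hsub => Finset.Subset.antisymm hsub fun v hv => ?_⟩
  have hv' := hG.1 v hv
  obtain ⟨p, hp, hps⟩ := hP.exists_mem_sum_eq (s := v.1 + v.2) (by omega) (by omega)
  have hpG : p ∈ G := hsub (Finset.mem_union_left _ (List.mem_toFinset.mpr hp))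
  have hp' := hG.1 p hpG
  by_cases hext : v.1 + v.2 = 2 ∨ v.1 + v.2 = m + n
  · have : v = p := Prod.ext (by omega) (by omega)
    exact this ▸ Finset.mem_union_left _ (List.mem_toFinset.mpr hp)
  obtain ⟨q, hq, hqs⟩ := hQ.exists_mem_sum_eq (s := v.1 + v.2) (by omega) (by omega)
  have hqG : q ∈ G := hsub (Finset.mem_union_right _ (List.mem_toFinset.mpr hq))
  rcases hG.eq_or_eq_of_sum_eq hpG hqG hv (fun h => hPQ p hp (h ▸ hq)) hps hqs with rfl | rfl
  · exact Finset.mem_union_left _ (List.mem_toFinset.mpr hp)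
  · exact Finset.mem_union_right _ (List.mem_toFinset.mpr hq)

theorem card_union_of_paths {P Q : List (ℕ × ℕ)} (hP : IsPath 1 1 m n P)
    (hQ : IsPath 2 1 m (n - 1) Q) (hPQ : ∀ v ∈ P, v ∉ Q) :
    (P.toFinset ∪ Q.toFinset).card = 2 * m + 2 * n - 4 := by
  rw [Finset.card_union_of_disjoint (Finset.disjoint_left.mpr fun v hvP hvQ =>
      hPQ v (List.mem_toFinset.mp hvP) (List.mem_toFinset.mp hvQ)),
    List.toFinset_card_of_nodup hP.nodup, List.toFinset_card_of_nodup hQ.nodup,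
    hP.length_eq, hQ.length_eq]
  have := hQ.mem_bounds hQ.head_mem
  have := hQ.mem_bounds hQ.getLast_mem
  simp only [Prod.le_def] at *
  omega

end Facets

theorem delta3_facets (m n : ℕ) (hm : 3 ≤ m) (hmn : m ≤ n) :
    (∀ F : Finset (ℕ × ℕ),
        IsFacet3 m n F ↔
          ∃ P Q : List (ℕ × ℕ), IsPath 1 1 m n P ∧ IsPath 2 1 m (n - 1) Q ∧
            (∀ v ∈ P, v ∉ Q) ∧ F = P.toFinset ∪ Q.toFinset) ∧
    (∀ F : Finset (ℕ × ℕ), IsFacet3 m n F → F.card = 2 * m + 2 * n - 4) := by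
  have hm₂ : 2 ≤ m := by omega
  have hn₂ : 2 ≤ n := by omega
  have facet_iff : ∀ F : Finset (ℕ × ℕ), IsFacet3 m n F ↔
      ∃ P Q : List (ℕ × ℕ), IsPath 1 1 m n P ∧ IsPath 2 1 m (n - 1) Q ∧
        (∀ v ∈ P, v ∉ Q) ∧ F = P.toFinset ∪ Q.toFinset := by
    refine fun F => ⟨fun hF => ?_, fun ⟨P, Q, hP, hQ, hPQ, hF⟩ => hF ▸ isFacet3_of_paths hP hQ hPQ⟩
    obtain ⟨P, Q, hP, hQ, hPQ, hsub⟩ := hF.1.exists_paths hm₂ hn₂ (hF.corners_subset hm₂ hn₂)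
    exact ⟨P, Q, hP, hQ, hPQ, hF.2 _ (isFacet3_of_paths hP hQ hPQ).1 hsub⟩
  refine ⟨facet_iff, fun F hF => ?_⟩
  obtain ⟨P, Q, hP, hQ, hPQ, rfl⟩ := (facet_iff F).mp hF
  exact card_union_of_paths hP hQ hPQ
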